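/- Suppose e : [0, T_c) → ℝ^{n+1} is differentiable and satisfies, for all t ∈ [0, T_c), e′(t) = −κ(t)·Λ(κ(t))·𝒬·(β·Φ(β⁻¹·e₀(t)) − 𝒜·e(t)) + 𝒰·e(t) + B_{n+1}·d(t), where e₀(t) = B₁ᵀ·e(t). Then the function ξ(t) := β⁻¹·𝒬⁻¹·Λ(κ(t))⁻¹·e(t) is differentiable on [0, T_c), satisfies B₁ᵀ·ξ(t) = β⁻¹·e₀(t), and for all t ∈ [0, T_c), ξ′(t) = κ(t)·(−Φ(B₁ᵀ·ξ(t)) + 𝒰·ξ(t) + β⁻¹·κ(t)^{−(n+1)}·B_{n+1}·d(t)). -/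

import Mathlib

open Matrix Real Set

/-- The nilpotent shift matrix `𝒰`, with `(i,j)` entry `1` if `j = i+1` and `0` otherwise. -/
noncomputable def Umat (n : ℕ) : Matrix (Fin (n+1)) (Fin (n+1)) ℝ :=
  Matrix.of fun i j => if (j : ℕ) = (i : ℕ) + 1 then 1 else 0

/-- The diagonal matrix `𝒟 = diag(0, 1, …, n)`. -/
noncomputable def Dmat (n : ℕ) : Matrix (Fin (n+1)) (Fin (n+1)) ℝ :=
  Matrix.diagonal fun i => (i : ℝ)

/-- The first standard basis vector `B₁ = e₀` of `ℝ^{n+1}`. -/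
noncomputable def B1 (n : ℕ) : Fin (n+1) → ℝ := Pi.single 0 1

/-- The last standard basis vector `B_{n+1} = e_n` of `ℝ^{n+1}`. -/
noncomputable def Blast (n : ℕ) : Fin (n+1) → ℝ := Pi.single (Fin.last n) 1

/-- The matrix `𝒬` whose `k`-th column is `(𝒰 - α·𝒟)^{n-k}·B_{n+1}`. -/
noncomputable def Qmat (n : ℕ) (α : ℝ) : Matrix (Fin (n+1)) (Fin (n+1)) ℝ :=
  Matrix.of fun i k => ((Umat n - α • Dmat n) ^ (n - (k : ℕ))).mulVec (Blast n) i

/-- The diagonal matrix `Λ(c) = diag(1, c, c², …, cⁿ)`. -/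
noncomputable def Lam (n : ℕ) (c : ℝ) : Matrix (Fin (n+1)) (Fin (n+1)) ℝ :=
  Matrix.diagonal fun i => c ^ (i : ℕ)

/-- The matrix `𝒜 = -𝒬⁻¹·(𝒰 - α·𝒟)^{n+1}·B_{n+1}·B₁ᵀ`. -/
noncomputable def Amat (n : ℕ) (α : ℝ) : Matrix (Fin (n+1)) (Fin (n+1)) ℝ :=
  -((Qmat n α)⁻¹ * (Umat n - α • Dmat n) ^ (n + 1) * Matrix.vecMulVec (Blast n) (B1 n))


section helpers

variable {n : ℕ} {α : ℝ}

lemma M_mulVec (w : Fin (n+1) → ℝ) (i : Fin (n+1)) :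
    ((Umat n - α • Dmat n).mulVec w) i
      = (if h : (i:ℕ) < n then w ⟨(i:ℕ)+1, by omega⟩ else 0) - α * (i:ℕ) * w i := by
  simp only [Matrix.mulVec, dotProduct, Matrix.sub_apply, Matrix.smul_apply, Umat, Dmat,
    Matrix.of_apply, Matrix.diagonal_apply, smul_eq_mul, sub_mul, ite_mul, one_mul, zero_mul,
    mul_ite, mul_zero, Finset.sum_sub_distrib]
  congr 1
  · by_cases h : (i:ℕ) < n
    · rw [dif_pos h, Finset.sum_eq_single (⟨(i:ℕ)+1, by omega⟩ : Fin (n+1))]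
      · simp
      · intro b _ hb
        rw [if_neg]
        intro hcon
        exact hb (Fin.ext hcon)
      · simp
    · rw [dif_neg h, Finset.sum_eq_zero]
      intro b _
      rw [if_neg]
      intro hcon
      have := b.isLt
      omega
  · rw [Finset.sum_eq_single i]
    · simp [mul_assoc]
    · intro b _ hb
      rw [if_neg (fun hc => hb hc.symm)]
    · simp

lemma pow_blast (j : ℕ) :
    (∀ i : Fin (n+1), (i:ℕ) + j < n → (((Umat n - α • Dmat n)^j).mulVec (Blast n)) i = 0)
    ∧ (∀ i : Fin (n+1), (i:ℕ) + j = n → (((Umat n - α • Dmat n)^j).mulVec (Blast n)) i = 1) := by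
  induction j with
  | zero =>
    constructor <;> intro i hi <;>
      simp only [pow_zero, Matrix.one_mulVec, Blast]
    · rw [Pi.single_eq_of_ne]
      intro hc
      rw [hc] at hi
      simp [Fin.last] at hi
    · have : i = Fin.last n := Fin.ext (by simpa [Fin.last] using hi)
      rw [this, Pi.single_eq_same]
  | succ j ih =>
    have key : ∀ i : Fin (n+1), (((Umat n - α • Dmat n)^(j+1)).mulVec (Blast n)) i
        = (if h : (i:ℕ) < n then ((Umat n - α • Dmat n)^j).mulVec (Blast n) ⟨(i:ℕ)+1, by omega⟩ else 0)
          - α * (i:ℕ) * ((Umat n - α • Dmat n)^j).mulVec (Blast n) i := by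
      intro i
      rw [pow_succ', ← Matrix.mulVec_mulVec, M_mulVec]
    constructor <;> intro i hi <;> rw [key]
    · rw [dif_pos (by omega), ih.1 _ (by simp; omega), ih.1 _ (by omega)]
      ring
    · rw [dif_pos (by omega), ih.2 _ (by simp; omega), ih.1 _ (by omega)]
      ring

lemma Qmat_apply (i k : Fin (n+1)) :
    Qmat n α i k = ((Umat n - α • Dmat n) ^ (n - (k:ℕ))).mulVec (Blast n) i := rfl

lemma Qmat_tri {i k : Fin (n+1)} (h : i < k) : Qmat n α i k = 0 := by
  rw [Qmat_apply]
  exact (pow_blast (n - (k:ℕ))).1 i (by have := k.isLt; have := Fin.lt_iff_val_lt_val.mp h; omega)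

lemma Qmat_diag (i : Fin (n+1)) : Qmat n α i i = 1 := by
  rw [Qmat_apply]
  exact (pow_blast (n - (i:ℕ))).2 i (by have := i.isLt; omega)

lemma Qmat_det : (Qmat n α).det = 1 := by
  rw [Matrix.det_of_lowerTriangular (Qmat n α) (fun i j h => Qmat_tri h)]
  simp [Qmat_diag]

lemma Qmat_inv_mul : (Qmat n α)⁻¹ * Qmat n α = 1 :=
  Matrix.nonsing_inv_mul _ (by rw [Qmat_det]; exact isUnit_one)

lemma Qmat_mul_inv : Qmat n α * (Qmat n α)⁻¹ = 1 :=
  Matrix.mul_nonsing_inv _ (by rw [Qmat_det]; exact isUnit_one)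

lemma B1_vecMul_Q : Matrix.vecMul (B1 n) (Qmat n α) = B1 n := by
  ext k
  rw [B1, Matrix.single_one_vecMul, Matrix.row_apply]
  rcases eq_or_ne k 0 with rfl | hk
  · rw [Qmat_diag, Pi.single_eq_same]
  · rw [Qmat_tri (by exact lt_of_le_of_ne (Fin.zero_le k) (Ne.symm hk)), Pi.single_eq_of_ne hk]

lemma B1_vecMul_Qinv : Matrix.vecMul (B1 n) (Qmat n α)⁻¹ = B1 n := by
  conv_lhs => rw [← B1_vecMul_Q (n := n) (α := α)]
  rw [Matrix.vecMul_vecMul, Qmat_mul_inv, Matrix.vecMul_one]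

lemma Qinv_mulVec_blast : (Qmat n α)⁻¹.mulVec (Blast n) = Blast n := by
  have h : (Qmat n α).mulVec (Blast n) = Blast n := by
    ext i
    rw [Blast]
    simp only [Matrix.mulVec_single, MulOpposite.op_one, one_smul, Matrix.col_apply]
    rw [Qmat_apply]
    simp [Matrix.one_mulVec, Blast, Matrix.one_apply, Pi.single_apply]
  conv_lhs => rw [← h, Matrix.mulVec_mulVec, Qmat_inv_mul, Matrix.one_mulVec]

lemma MQ_eq : (Umat n - α • Dmat n) * Qmat n α
    = Qmat n α * Umat n
      + Matrix.vecMulVec (((Umat n - α • Dmat n)^(n+1)).mulVec (Blast n)) (B1 n) := by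
  ext i k
  have hL : ((Umat n - α • Dmat n) * Qmat n α) i k
      = ((Umat n - α • Dmat n)^(n - (k:ℕ) + 1)).mulVec (Blast n) i := by
    rw [pow_succ', ← Matrix.mulVec_mulVec]
    simp [Matrix.mul_apply, Matrix.mulVec, dotProduct, Qmat_apply]
  rw [hL, Matrix.add_apply, Matrix.vecMulVec_apply]
  induction k using Fin.cases with
  | zero =>
    have h0 : (Qmat n α * Umat n) i 0 = 0 := by
      rw [Matrix.mul_apply]
      apply Finset.sum_eq_zero
      intro j _
      simp [Umat]
    rw [h0, B1, Pi.single_eq_same]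
    simp
  | succ j =>
    have h1 : (Qmat n α * Umat n) i j.succ = Qmat n α i j.castSucc := by
      rw [Matrix.mul_apply, Finset.sum_eq_single j.castSucc]
      · simp [Umat]
      · intro b _ hb
        rw [Umat]
        simp only [Matrix.of_apply, Fin.val_succ]
        rw [if_neg, mul_zero]
        intro hc
        apply hb
        apply Fin.ext
        simp only [Fin.coe_castSucc]
        omega
      · simp
    have he : n - ((j.succ : Fin (n+1)) : ℕ) + 1 = n - ((j.castSucc : Fin (n+1)) : ℕ) := by
      have := j.isLt
      simp only [Fin.val_succ, Fin.coe_castSucc]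
      omega
    rw [h1, B1, Pi.single_eq_of_ne (Fin.succ_ne_zero j), mul_zero, add_zero, Qmat_apply, he]

lemma mul_vecMulVec (A : Matrix (Fin (n+1)) (Fin (n+1)) ℝ) (u v : Fin (n+1) → ℝ) :
    A * Matrix.vecMulVec u v = Matrix.vecMulVec (A.mulVec u) v := by
  ext i j
  simp only [Matrix.mul_apply, Matrix.vecMulVec_apply, Matrix.mulVec, dotProduct,
    Finset.sum_mul]
  exact Finset.sum_congr rfl (fun k _ => by ring)

lemma Qinv_M : (Qmat n α)⁻¹ * (Umat n - α • Dmat n)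
    = (Umat n - Amat n α) * (Qmat n α)⁻¹ := by
  have key : Umat n - Amat n α = (Qmat n α)⁻¹ * (Umat n - α • Dmat n) * Qmat n α := by
    rw [Matrix.mul_assoc, MQ_eq, Matrix.mul_add, ← Matrix.mul_assoc, Qmat_inv_mul,
      Matrix.one_mul, Amat, sub_neg_eq_add, Matrix.mul_assoc ((Qmat n α)⁻¹), mul_vecMulVec]
  rw [key, Matrix.mul_assoc, Qmat_mul_inv, Matrix.mul_one]

lemma Lam_mul_Lam {k c : ℝ} (h : k * c = 1) : Lam n k * Lam n c = 1 := by
  rw [Lam, Lam, Matrix.diagonal_mul_diagonal]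
  have : (fun i : Fin (n+1) => k ^ (i:ℕ) * c ^ (i:ℕ)) = fun _ => (1:ℝ) := by
    funext i
    rw [← mul_pow, h, one_pow]
  rw [this, Matrix.diagonal_one]

lemma Lam_inv {k c : ℝ} (h : k * c = 1) : (Lam n k)⁻¹ = Lam n c :=
  Matrix.inv_eq_right_inv (Lam_mul_Lam h)

lemma Lam_mul_U {k c : ℝ} (h : k * c = 1) : Lam n c * Umat n = k • (Umat n * Lam n c) := by
  ext i j
  simp only [Lam, Umat, Matrix.diagonal_mul, Matrix.mul_diagonal, Matrix.smul_apply,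
    Matrix.of_apply, smul_eq_mul]
  split_ifs with hc
  · rw [hc, pow_succ]
    linear_combination (-(c ^ (i:ℕ))) * h
  · simp

lemma Lam_mulVec_blast (c : ℝ) : (Lam n c).mulVec (Blast n) = c ^ n • Blast n := by
  ext i
  rw [Lam, Blast, Matrix.diagonal_mulVec_single]
  simp only [Pi.smul_apply, Pi.single_apply, smul_eq_mul]
  split_ifs with h <;> simp [h, Fin.val_last]

lemma vecMulVec_mulVec' (u w v : Fin (n+1) → ℝ) :
    (Matrix.vecMulVec u w).mulVec v = (dotProduct w v) • u := by
  ext i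
  simp only [Matrix.mulVec, dotProduct, Matrix.vecMulVec_apply, Pi.smul_apply,
    smul_eq_mul, Finset.sum_mul]
  exact Finset.sum_congr rfl (fun k _ => by ring)

lemma Amat_mulVec (v : Fin (n+1) → ℝ) :
    (Amat n α).mulVec v
      = (dotProduct (B1 n) v)
          • (-(((Qmat n α)⁻¹ * (Umat n - α • Dmat n)^(n+1)).mulVec (Blast n))) := by
  rw [Amat, Matrix.neg_mulVec, ← Matrix.mulVec_mulVec, vecMulVec_mulVec', Matrix.mulVec_smul,
    smul_neg]

end helpers

theorem stmt_8 (α Tc η : ℝ) (hα : 0 < α) (hTc : 0 < Tc) (hη : η ∈ Set.Ioc (0:ℝ) 1)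
    (n : ℕ) (κ : ℝ → ℝ)
    (hκ : ∀ t, κ t = η / (α * (Tc - η * t)))
    (β : ℝ) (hβ : 0 < β) (Φ : ℝ → (Fin (n+1) → ℝ)) (d : ℝ → ℝ)
    (e : ℝ → (Fin (n+1) → ℝ))
    (he : ∀ t ∈ Set.Ico (0:ℝ) Tc,
      HasDerivAt e
        (-(κ t) • ((Lam n (κ t)).mulVec ((Qmat n α).mulVec
            (β • Φ (β⁻¹ * dotProduct (B1 n) (e t)) - (Amat n α).mulVec (e t))))
          + (Umat n).mulVec (e t) + d t • Blast n) t)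
    (ξ : ℝ → (Fin (n+1) → ℝ))
    (hξ : ∀ t, ξ t = β⁻¹ • ((Qmat n α)⁻¹.mulVec ((Lam n (κ t))⁻¹.mulVec (e t)))) :
    ∀ t ∈ Set.Ico (0:ℝ) Tc,
      dotProduct (B1 n) (ξ t) = β⁻¹ * dotProduct (B1 n) (e t) ∧
      HasDerivAt ξ
        (κ t • (-Φ (dotProduct (B1 n) (ξ t)) + (Umat n).mulVec (ξ t)
          + (β⁻¹ * ((κ t) ^ (n+1))⁻¹ * d t) • Blast n)) t := by
  intro t ht
  obtain ⟨ht0, ht1⟩ := ht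
  obtain ⟨hη0, hη1⟩ := hη
  have hβ' : (β:ℝ) ≠ 0 := ne_of_gt hβ
  have hββ : β⁻¹ * β = 1 := inv_mul_cancel₀ hβ'
  have htpos : 0 < Tc - η * t := by nlinarith [mul_le_of_le_one_left ht0 hη1]
  set ct := α * (Tc - η * t) / η with hctdef
  have hct : κ t * ct = 1 := by
    rw [hκ, hctdef]
    field_simp
  have hct' : ct * κ t = 1 := by rw [mul_comm]; exact hct
  have hLaminv : (Lam n (κ t))⁻¹ = Lam n ct := Lam_inv hct
  -- Part 1
  have hB1Lam : Matrix.vecMul (B1 n) (Lam n ct) = B1 n := by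
    ext j
    rw [Lam, Matrix.vecMul_diagonal]
    rcases eq_or_ne j 0 with rfl | hj
    · simp [B1]
    · simp [B1, Pi.single_eq_of_ne hj]
  have part1 : dotProduct (B1 n) (ξ t) = β⁻¹ * dotProduct (B1 n) (e t) := by
    rw [hξ, hLaminv, dotProduct_smul, smul_eq_mul]
    congr 1
    rw [Matrix.dotProduct_mulVec, B1_vecMul_Qinv, Matrix.dotProduct_mulVec, hB1Lam]
  refine ⟨part1, ?_⟩
  -- derivative of the scalar function s ↦ α (Tc - η s)/η
  have hcder : HasDerivAt (fun s : ℝ => α * (Tc - η * s) / η) (-α) t := by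
    have h1 : HasDerivAt (fun s : ℝ => Tc - η * s) (-η) t := by
      simpa using ((hasDerivAt_id t).const_mul η).const_sub Tc
    have h2 := (h1.const_mul α).div_const η
    rw [mul_neg, neg_div, mul_div_cancel_right₀ α (ne_of_gt hη0)] at h2
    exact h2
  have hE := he t ⟨ht0, ht1⟩
  set Φx := Φ (β⁻¹ * dotProduct (B1 n) (e t)) with hΦx
  set w := β • Φx - (Amat n α).mulVec (e t) with hw
  set E := -(κ t) • ((Lam n (κ t)).mulVec ((Qmat n α).mulVec w))
      + (Umat n).mulVec (e t) + d t • Blast n with hEdef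
  have hei : ∀ i, HasDerivAt (fun s => e s i) (E i) t := fun i => hasDerivAt_pi.1 hE i
  set g : ℝ → Fin (n+1) → ℝ := fun s i => (α * (Tc - η * s) / η) ^ (i:ℕ) * e s i with hgdef
  set g' : Fin (n+1) → ℝ :=
    fun i => ((i:ℕ) * ct ^ ((i:ℕ)-1) * (-α)) * e t i + ct ^ (i:ℕ) * E i with hg'def
  have hgder : HasDerivAt g g' t := by
    rw [hasDerivAt_pi]
    intro i
    exact (hcder.pow _).mul (hei i)
  have hev : ξ =ᶠ[nhds t] fun s => β⁻¹ • ((Qmat n α)⁻¹.mulVec (g s)) := by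
    have hcont : Continuous fun s : ℝ => Tc - η * s := by fun_prop
    have hopen : IsOpen {s : ℝ | Tc - η * s ≠ 0} := isOpen_compl_singleton.preimage hcont
    filter_upwards [hopen.mem_nhds (show Tc - η * t ≠ 0 from ne_of_gt htpos)] with s hsne
    have hcs : κ s * (α * (Tc - η * s) / η) = 1 := by
      rw [hκ]
      field_simp
    rw [hξ s, Lam_inv hcs]
    have hgs : (Lam n (α * (Tc - η * s) / η)).mulVec (e s) = g s := by
      funext i
      rw [Lam, Matrix.mulVec_diagonal]
    rw [hgs]
  have hFder : HasDerivAt (fun s => β⁻¹ • ((Qmat n α)⁻¹.mulVec (g s)))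
      (β⁻¹ • ((Qmat n α)⁻¹.mulVec g')) t := by
    apply HasDerivAt.fun_const_smul
    rw [hasDerivAt_pi]
    intro i
    have hrw : ∀ v : Fin (n+1) → ℝ, (Qmat n α)⁻¹.mulVec v i = ∑ j, (Qmat n α)⁻¹ i j * v j :=
      fun v => rfl
    simp only [hrw]
    exact HasDerivAt.fun_sum fun j _ => (hasDerivAt_pi.1 hgder j).const_mul _
  have hxider : HasDerivAt ξ (β⁻¹ • ((Qmat n α)⁻¹.mulVec g')) t :=
    hFder.congr_of_eventuallyEq hev
  -- algebraic identification of the derivative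
  have hbξ : (Qmat n α)⁻¹.mulVec ((Lam n ct).mulVec (e t)) = β • ξ t := by
    rw [hξ, hLaminv, smul_smul, mul_inv_cancel₀ hβ', one_smul]
  have hAxi : (Amat n α).mulVec (ξ t) = β⁻¹ • ((Amat n α).mulVec (e t)) := by
    rw [Amat_mulVec, Amat_mulVec, part1, smul_smul]
  have hpow : ((κ t) ^ (n+1))⁻¹ = ct ^ (n+1) := by
    have h2 : (κ t) ^ (n+1) * ct ^ (n+1) = 1 := by rw [← mul_pow, hct, one_pow]
    exact inv_eq_of_mul_eq_one_right h2
  have hA : (fun i : Fin (n+1) => ((i:ℕ) * ct ^ ((i:ℕ)-1) * (-α)) * e t i)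
      = (-(α * κ t)) • ((Dmat n).mulVec ((Lam n ct).mulVec (e t))) := by
    funext i
    simp only [Pi.smul_apply, smul_eq_mul]
    rw [Dmat, Matrix.mulVec_diagonal, Lam, Matrix.mulVec_diagonal]
    rcases Nat.eq_zero_or_pos (i:ℕ) with h0 | hpos
    · rw [h0]
      simp
    · have hstep : ct ^ (i:ℕ) = ct ^ ((i:ℕ)-1) * ct := by
        conv_lhs => rw [show (i:ℕ) = ((i:ℕ)-1)+1 by omega]
        rw [pow_succ]
      rw [hstep]
      linear_combination (α * (i:ℕ) * ct ^ ((i:ℕ)-1) * e t i) * hct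
  have hB : (Lam n ct).mulVec E
      = (-(κ t)) • ((Qmat n α).mulVec w) + κ t • ((Umat n * Lam n ct).mulVec (e t))
        + (d t * ct ^ n) • Blast n := by
    rw [hEdef, Matrix.mulVec_add, Matrix.mulVec_add, Matrix.mulVec_smul, Matrix.mulVec_smul,
      Matrix.mulVec_mulVec, Lam_mul_Lam hct', Matrix.one_mulVec, Matrix.mulVec_mulVec,
      Lam_mul_U hct, Matrix.smul_mulVec, Lam_mulVec_blast, smul_smul]
  have hg'eq : g' = κ t • (((Umat n - α • Dmat n) * Lam n ct).mulVec (e t))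
      - κ t • ((Qmat n α).mulVec w) + (d t * ct ^ n) • Blast n := by
    have hsplit : g' = (fun i : Fin (n+1) => ((i:ℕ) * ct ^ ((i:ℕ)-1) * (-α)) * e t i)
        + (Lam n ct).mulVec E := by
      funext i
      simp only [hg'def, Pi.add_apply]
      congr 1
      rw [Lam, Matrix.mulVec_diagonal]
    have hexp : ((Umat n - α • Dmat n) * Lam n ct).mulVec (e t)
        = (Umat n * Lam n ct).mulVec (e t)
          - α • ((Dmat n).mulVec ((Lam n ct).mulVec (e t))) := by
      rw [Matrix.sub_mul, Matrix.sub_mulVec, Matrix.smul_mul, Matrix.smul_mulVec,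
        Matrix.mulVec_mulVec]
    rw [hsplit, hA, hB, hexp]
    module
  have p1 : (Qmat n α)⁻¹.mulVec (((Umat n - α • Dmat n) * Lam n ct).mulVec (e t))
      = β • ((Umat n).mulVec (ξ t)) - ((Amat n α).mulVec (e t)) := by
    rw [Matrix.mulVec_mulVec, ← Matrix.mul_assoc, Qinv_M, Matrix.mul_assoc,
      ← Matrix.mulVec_mulVec, ← Matrix.mulVec_mulVec, hbξ, Matrix.sub_mulVec,
      Matrix.mulVec_smul, Matrix.mulVec_smul, hAxi, smul_smul, mul_inv_cancel₀ hβ', one_smul]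
  have p2 : (Qmat n α)⁻¹.mulVec ((Qmat n α).mulVec w) = w := by
    rw [Matrix.mulVec_mulVec, Qmat_inv_mul, Matrix.one_mulVec]
  clear_value ct Φx w E g g'
  have hval : β⁻¹ • ((Qmat n α)⁻¹.mulVec g')
      = κ t • (-Φ (dotProduct (B1 n) (ξ t)) + (Umat n).mulVec (ξ t)
          + (β⁻¹ * ((κ t) ^ (n+1))⁻¹ * d t) • Blast n) := by
    rw [part1, ← hΦx, hpow, hg'eq, Matrix.mulVec_add, Matrix.mulVec_sub, Matrix.mulVec_smul,
      Matrix.mulVec_smul, Matrix.mulVec_smul, p1, p2, Qinv_mulVec_blast, hw]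
    match_scalars
    · linear_combination (κ t) * hββ
    · ring
    · linear_combination (-(κ t)) * hββ
    · linear_combination (-(β⁻¹ * d t * ct ^ n)) * hct
  rw [← hval]
  exact hxider
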